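/- arXiv:1305.6095 — 7 statements merged into one kernel-verified Lean document; each statement's English description precedes it below -/
import Mathlib

section
/- Each run-length factor of a string is covered by at most 2 s-factors: if an s-factor of the Lempel-Ziv (s-)factorization of a string S begins at position j > 1 within a maximal run a^p of equal characters in S, then that s-factor extends at least to the end of the run. -/
/-- `IsSFact S fs` : `fs` is the s-factorization (LZ factorization) of `S`.
Positions are 0-indexed: factor `i` starts at index `l = |f_1 ... f_{i-1}|`.
If the character `S[l]` does not occur earlier, the factor is that single character;
otherwise it is the longest prefix of `S.drop l` occurring at some earlier
starting index `p < l` (self-overlap allowed). -/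
def IsSFact {α : Type*} (S : List α) (fs : List (List α)) : Prop :=
  fs.flatten = S ∧ (∀ f ∈ fs, f ≠ []) ∧
  ∀ i (h : i < fs.length),
    ((¬ ∃ j < ((fs.take i).flatten).length, S[j]? = S[((fs.take i).flatten).length]?) →
        fs.get ⟨i, h⟩ = (S.drop ((fs.take i).flatten).length).take 1) ∧
    ((∃ j < ((fs.take i).flatten).length, S[j]? = S[((fs.take i).flatten).length]?) →
        (fs.get ⟨i, h⟩ <+: S.drop ((fs.take i).flatten).length ∧
         (∃ p < ((fs.take i).flatten).length, fs.get ⟨i, h⟩ <+: S.drop p) ∧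
         ∀ g, g <+: S.drop ((fs.take i).flatten).length →
           (∃ p < ((fs.take i).flatten).length, g <+: S.drop p) →
           g.length ≤ (fs.get ⟨i, h⟩).length))

theorem IsSFact.length_le_of_isPrefix_drop {α : Type*} {S : List α} {fs : List (List α)}
    (hfs : IsSFact S fs) {i : ℕ} (hi : i < fs.length) {g : List α} {q : ℕ}
    (hq : q < ((fs.take i).flatten).length)
    (hg : g <+: S.drop ((fs.take i).flatten).length) (hgq : g <+: S.drop q) :
    g.length ≤ (fs.get ⟨i, hi⟩).length := by
  cases g with
  | nil => exact Nat.zero_le _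
  | cons c g =>
    have head_eq {r : ℕ} (h : c :: g <+: S.drop r) : S[r]? = some c := by
      rw [← List.head?_drop, ← List.singleton_prefix_iff_head?_eq_some]
      exact (List.cons_prefix_cons.2 ⟨rfl, List.nil_prefix⟩).trans h
    have hrepeat : ∃ j < ((fs.take i).flatten).length, S[j]? = S[((fs.take i).flatten).length]? :=
      ⟨q, hq, by rw [head_eq hgq, head_eq hg]⟩
    exact ((hfs.2.2 i hi).2 hrepeat).2.2 _ hg ⟨q, hq, hgq⟩

theorem List.drop_length_add_append_replicate {α : Type*} (A B : List α) (a : α) {p s : ℕ}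
    (hs : s ≤ p) :
    (A ++ List.replicate p a ++ B).drop (A.length + s) = List.replicate (p - s) a ++ B := by
  rw [List.append_assoc, List.drop_append, List.drop_append_of_le_length (by simpa using hs),
    List.drop_replicate]
  simp

theorem stmt0_general {α : Type*} (S : List α) (fs : List (List α)) (hfs : IsSFact S fs)
    (a : α) (p : ℕ) (A B : List α)
    (hS : S = A ++ List.replicate p a ++ B)
    (i : ℕ) (hi : i < fs.length)
    (hstart : A.length < ((fs.take i).flatten).length)
    (hstart2 : ((fs.take i).flatten).length < A.length + p) :
    A.length + p ≤ ((fs.take i).flatten).length + (fs.get ⟨i, hi⟩).length := by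
  set l := ((fs.take i).flatten).length
  obtain ⟨t, hl⟩ : ∃ t, l = A.length + (t + 1) := ⟨l - A.length - 1, by omega⟩
  -- The rest of the run starting at `l` also starts one position earlier.
  have hrest : List.replicate (p - (t + 1)) a <+: S.drop l := by
    rw [hl, hS, List.drop_length_add_append_replicate A B a (by omega)]
    exact List.prefix_append _ _
  have hrest_earlier : List.replicate (p - (t + 1)) a <+: S.drop (A.length + t) := by
    rw [hS, List.drop_length_add_append_replicate A B a (by omega),
      show p - t = p - (t + 1) + 1 by omega, List.replicate_add, List.append_assoc]
    exact List.prefix_append _ _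
  have hlen := hfs.length_le_of_isPrefix_drop hi (by omega) hrest hrest_earlier
  rw [List.length_replicate] at hlen
  omega

/-- If an s-factor begins strictly inside a maximal run `a^p` (i.e. at the `j`-th
character of the run with `j > 1`), then it extends at least to the end of the run. -/
theorem stmt0 {α : Type*} (S : List α) (fs : List (List α)) (hfs : IsSFact S fs)
    (a : α) (p : ℕ) (A B : List α) (hp : 1 ≤ p)
    (hS : S = A ++ List.replicate p a ++ B)
    (hA : ∀ x, A.getLast? = some x → x ≠ a)
    (hB : ∀ x, B.head? = some x → x ≠ a)
    (i : ℕ) (hi : i < fs.length)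
    (hstart : A.length < ((fs.take i).flatten).length)
    (hstart2 : ((fs.take i).flatten).length < A.length + p) :
    A.length + p ≤ ((fs.take i).flatten).length + (fs.get ⟨i, hi⟩).length :=
  stmt0_general S fs hfs a p A B hS i hi hstart hstart2
end

section
/- The number z of s-factors in the s-factorization of a string S is at most 2m, where m is the number of maximal runs in the run-length encoding of S. -/
/-! Call `k` a run boundary of `S` if `S[k - 1] ≠ S[k]`. The s-factor starting at `l > 0` either
starts at a run boundary, or `S[l - 1] = S[l]`; in the latter case the rest of the run of `S[l]`
also occurs one position earlier, so the factor extends to the end of that run. Hence every two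
consecutive factors contain a run boundary, and the number of runs of the suffix of `S` not yet
factorized (the length of its `destutter (· ≠ ·)`) drops by at least one every two factors. -/

namespace List

variable {α : Type*}

theorem length_flatten_take_add_one {fs : List (List α)} {i : ℕ} (hi : i < fs.length) :
    ((fs.take (i + 1)).flatten).length = ((fs.take i).flatten).length + fs[i].length := by
  rw [take_add_one, getElem?_eq_getElem hi, Option.toList_some, flatten_append,
    flatten_singleton, length_append]

theorem Sublist.length_destutter_ne_le [DecidableEq α] {l₁ l₂ : List α} (h : l₁ <+ l₂) :
    (l₁.destutter (· ≠ ·)).length ≤ (l₂.destutter (· ≠ ·)).length :=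
  (isChain_destutter _ l₁).length_le_length_destutter_ne ((destutter_sublist _ l₁).trans h)

theorem length_destutter_ne_cons_cons [DecidableEq α] {a b : α} (h : a ≠ b) (l : List α) :
    ((a :: b :: l).destutter (· ≠ ·)).length = ((b :: l).destutter (· ≠ ·)).length + 1 := by
  rw [destutter_cons_cons, if_pos h, length_cons, destutter_cons']

theorem length_destutter_ne_drop_lt [DecidableEq α] {S : List α} {i j k : ℕ}
    (hik : i < k) (hkj : k ≤ j) (hk : k < S.length) (hne : S[k - 1]? ≠ S[k]?) :
    ((S.drop j).destutter (· ≠ ·)).length < ((S.drop i).destutter (· ≠ ·)).length := by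
  have hpred : k - 1 + 1 = k := by omega
  have hdrop : S.drop (k - 1) = S[k - 1] :: S[k] :: S.drop (k + 1) := by
    rw [drop_eq_getElem_cons (by omega), hpred, drop_eq_getElem_cons hk]
  have hne' : S[k - 1] ≠ S[k] := by
    rwa [getElem?_eq_getElem (by omega), getElem?_eq_getElem hk, ne_eq, Option.some_inj] at hne
  calc ((S.drop j).destutter (· ≠ ·)).length
      ≤ ((S.drop k).destutter (· ≠ ·)).length :=
        (drop_sublist_drop_left S hkj).length_destutter_ne_le
    _ < ((S.drop (k - 1)).destutter (· ≠ ·)).length := by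
        rw [hdrop, length_destutter_ne_cons_cons hne', ← drop_eq_getElem_cons hk]
        exact Nat.lt_succ_self _
    _ ≤ ((S.drop i).destutter (· ≠ ·)).length :=
        (drop_sublist_drop_left S (by omega)).length_destutter_ne_le

theorem exists_getElem?_ne_of_forall_prefix_length_le {S : List α} {l n : ℕ} (hl : 0 < l)
    (hn : l + n < S.length)
    (hmax : ∀ g, g <+: S.drop l → (∃ p < l, g <+: S.drop p) → g.length ≤ n) :
    ∃ k, l ≤ k ∧ k ≤ l + n ∧ S[k - 1]? ≠ S[k]? := by
  by_contra! hconst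
  -- `S` is constant on `[l - 1, l + n]`, so the word of length `n + 1` at `l` also occurs at `l - 1`
  have hshift : (S.drop l).take (n + 1) = (S.drop (l - 1)).take (n + 1) := by
    refine ext_getElem? fun j => ?_
    simp only [getElem?_take, getElem?_drop]
    split_ifs with hj
    · have hstep := hconst (l + j) (by omega) (by omega)
      rwa [show l + j - 1 = l - 1 + j by omega, eq_comm] at hstep
    · rfl
  have hlen := hmax _ (take_prefix _ _) ⟨l - 1, by omega, by rw [hshift]; exact take_prefix _ _⟩
  simp only [length_take, length_drop] at hlen
  omega

end List

namespace IsSFact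

variable {α : Type*} {S : List α} {fs : List (List α)}

theorem length_flatten_take_lt (hfs : IsSFact S fs) {i : ℕ} (hi : i < fs.length) :
    ((fs.take i).flatten).length < ((fs.take (i + 1)).flatten).length := by
  have hpos := List.length_pos_iff.mpr (hfs.2.1 _ (List.getElem_mem hi))
  rw [List.length_flatten_take_add_one hi]
  omega

theorem length_flatten_take_lt_length (hfs : IsSFact S fs) {i : ℕ} (hi : i < fs.length) :
    ((fs.take i).flatten).length < S.length := by
  calc ((fs.take i).flatten).length < ((fs.take (i + 1)).flatten).length :=
        hfs.length_flatten_take_lt hi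
    _ ≤ (fs.flatten).length := List.IsPrefix.length_le
        ⟨(fs.drop (i + 1)).flatten, by rw [← List.flatten_append, List.take_append_drop]⟩
    _ = S.length := by rw [hfs.1]

theorem exists_getElem?_ne (hfs : IsSFact S fs) {i : ℕ} (hi : i + 2 < fs.length) :
    ∃ k, ((fs.take i).flatten).length < k ∧ k ≤ ((fs.take (i + 2)).flatten).length ∧
      k < S.length ∧ S[k - 1]? ≠ S[k]? := by
  set l := ((fs.take (i + 1)).flatten).length
  have hil : ((fs.take i).flatten).length < l := hfs.length_flatten_take_lt (by omega)
  have hend : l + (fs.get ⟨i + 1, by omega⟩).length = ((fs.take (i + 2)).flatten).length :=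
    (List.length_flatten_take_add_one (by omega)).symm
  have hlt : ((fs.take (i + 2)).flatten).length < S.length :=
    hfs.length_flatten_take_lt_length hi
  by_cases hc : S[l - 1]? = S[l]?
  · obtain ⟨-, -, hmax⟩ := (hfs.2.2 (i + 1) (by omega)).2 ⟨l - 1, by omega, hc⟩
    obtain ⟨k, hlk, hkn, hk⟩ :=
      List.exists_getElem?_ne_of_forall_prefix_length_le (by omega) (by omega) hmax
    exact ⟨k, by omega, by omega, by omega, hk⟩
  · exact ⟨l, hil, by omega, by omega, hc⟩

theorem sub_le_two_mul_length_destutter_drop [DecidableEq α] (hfs : IsSFact S fs) {i : ℕ}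
    (hi : i ≤ fs.length) : fs.length - i ≤
      2 * ((S.drop ((fs.take i).flatten).length).destutter (· ≠ ·)).length := by
  induction h : fs.length - i using Nat.strong_induction_on generalizing i with
  | _ d ih =>
    rcases Nat.lt_or_ge (i + 2) fs.length with hi2 | hi2
    · obtain ⟨k, hik, hkj, hk, hne⟩ := hfs.exists_getElem?_ne hi2
      have hdec := List.length_destutter_ne_drop_lt hik hkj hk hne
      have hrest := ih (fs.length - (i + 2)) (by omega) hi2.le rfl
      omega
    · rcases Nat.lt_or_ge i fs.length with hi1 | hi1
      · have hlt := hfs.length_flatten_take_lt_length hi1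
        have hpos : 0 < ((S.drop ((fs.take i).flatten).length).destutter (· ≠ ·)).length := by
          rw [List.length_pos_iff, Ne, List.destutter_eq_nil, List.drop_eq_nil_iff]
          omega
        omega
      · omega

end IsSFact

/-- The number of s-factors is at most twice the number of maximal runs of `S`
(the length of the run-length encoding, i.e. of `S` with adjacent duplicates removed). -/
theorem stmt1 {α : Type*} [DecidableEq α] (S : List α) (fs : List (List α))
    (hfs : IsSFact S fs) :
    fs.length ≤ 2 * (S.destutter (· ≠ ·)).length := by
  simpa using hfs.sub_le_two_mul_length_destutter_drop (Nat.zero_le _)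
end

section
/- Each equivalence class of the end-position relation has a unique longest member: for any substring u of S, the equivalence class [u] = { w ∈ Substr(S) : EndPos_S(w) = EndPos_S(u) } contains a unique element of maximal length, and every member of [u] is a suffix of this longest member. -/
/-!
Two members of an end-position class share an end position `j`, so both are suffixes of
`S.take (j + 1)` and one of them is a suffix of the other. The class is therefore a chain for the
suffix order, with lengths bounded by `S.length`; a member of maximal length is its greatest
element, and any other member of maximal length is a suffix of it of the same length.
-/

/-- `endPos S u` is the set of (0-indexed) ending positions `j` of occurrences of `u` in `S`,
i.e. positions `j` such that `u` is a suffix of `S[0..j]`. -/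
def endPos {α : Type*} (S u : List α) : Set ℕ := {j | j < S.length ∧ u <:+ S.take (j + 1)}

lemma exists_mem_endPos_of_infix {α : Type*} {S u : List α} (hu : u <:+: S) (hune : u ≠ []) :
    ∃ j, j ∈ endPos S u := by
  obtain ⟨s, t, rfl⟩ := hu
  have hpos : 0 < u.length := List.length_pos_iff.mpr hune
  refine ⟨s.length + u.length - 1, by simp only [List.append_assoc, List.length_append]; omega, ?_⟩
  rw [Nat.sub_add_cancel (by omega), List.append_assoc, List.take_length_add_append,
    List.take_left]
  exact List.suffix_append s u

lemma suffix_or_suffix_of_mem_endPos {α : Type*} {S w₁ w₂ : List α} {j : ℕ}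
    (h₁ : j ∈ endPos S w₁) (h₂ : j ∈ endPos S w₂) : w₁ <:+ w₂ ∨ w₂ <:+ w₁ :=
  List.suffix_or_suffix_of_suffix h₁.2 h₂.2

lemma exists_suffix_greatest_of_chain {α : Type*} {P : List α → Prop} {n : ℕ}
    (hchain : ∀ w₁ w₂, P w₁ → P w₂ → w₁ <:+ w₂ ∨ w₂ <:+ w₁) {u : List α} (hu : P u)
    (hbdd : ∀ w, P w → w.length ≤ n) : ∃ v, P v ∧ ∀ w, P w → w <:+ v := by
  classical
  let hasLength (k : ℕ) : Prop := ∃ w, P w ∧ w.length = k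
  obtain ⟨v, hv, hvlen⟩ : hasLength (Nat.findGreatest hasLength n) :=
    Nat.findGreatest_spec (hbdd u hu) ⟨u, hu, rfl⟩
  refine ⟨v, hv, fun w hw => ?_⟩
  rcases hchain w v hw hv with hwv | hvw
  · exact hwv
  · have hle : w.length ≤ v.length := hvlen ▸ Nat.le_findGreatest (hbdd w hw) ⟨w, hw, rfl⟩
    rw [hvw.eq_of_length (le_antisymm hvw.length_le hle)]

/-- Each end-position equivalence class has a unique longest member,
and every member of the class is a suffix of it. -/
theorem stmt5 {α : Type*} (S u : List α) (hu : u <:+: S) (hune : u ≠ []) :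
    ∃ v, (v <:+: S ∧ v ≠ [] ∧ endPos S v = endPos S u) ∧
      (∀ w, (w <:+: S ∧ w ≠ [] ∧ endPos S w = endPos S u) → w.length ≤ v.length) ∧
      (∀ w, (w <:+: S ∧ w ≠ [] ∧ endPos S w = endPos S u) → w <:+ v) ∧
      ∀ v', (v' <:+: S ∧ v' ≠ [] ∧ endPos S v' = endPos S u) →
        (∀ w, (w <:+: S ∧ w ≠ [] ∧ endPos S w = endPos S u) → w.length ≤ v'.length) →
        v' = v := by
  obtain ⟨j, hj⟩ := exists_mem_endPos_of_infix hu hune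
  obtain ⟨v, hv, hgreatest⟩ := exists_suffix_greatest_of_chain
    (P := fun w => w <:+: S ∧ w ≠ [] ∧ endPos S w = endPos S u)
    (fun w₁ w₂ h₁ h₂ => suffix_or_suffix_of_mem_endPos (h₁.2.2 ▸ hj) (h₂.2.2 ▸ hj))
    ⟨hu, hune, rfl⟩ (fun w hw => hw.1.length_le)
  refine ⟨v, hv, fun w hw => (hgreatest w hw).length_le, hgreatest, fun v' hv' hmax' => ?_⟩
  exact (hgreatest v' hv').eq_of_length (le_antisymm (hgreatest v' hv').length_le (hmax' v hv))
end

section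
/- If u and ua (for a character a) are substrings of S and the edge ([u], a, [ua]) of the DAWG is secondary, i.e., |longest([u])| + 1 < |longest([ua])|, then there is a unique character b such that every occurrence of longest([u])·a in S ending at a position j ∈ EndPos_S(ua) with j > |longest([u])·a| is immediately preceded by b; more precisely, b·longest([u])·a ≡_S longest([u])·a. -/
lemma endPos_mono {α : Type*} (S : List α) {v w : List α} (h : v <:+ w) :
    endPos S w ⊆ endPos S v := fun j hj => ⟨hj.1, h.trans hj.2⟩

lemma endPos_nonempty {α : Type*} {S v : List α} (h : v <:+: S) (hv : v ≠ []) :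
    ∃ j, j ∈ endPos S v := by
  obtain ⟨p, s, rfl⟩ := h
  have hvl : 1 ≤ v.length := List.length_pos_iff.mpr hv
  refine ⟨p.length + v.length - 1, ?_, ?_⟩
  · simp only [List.length_append]
    omega
  · have h1 : p.length + v.length - 1 + 1 = (p ++ v).length := by
      simp only [List.length_append]; omega
    rw [h1, List.take_left]
    exact ⟨p, rfl⟩

lemma endPos_snoc_subset {α : Type*} {S v1 v2 : List α} (a : α) (hv1 : v1 ≠ [])
    (h : endPos S v1 = endPos S v2) :
    endPos S (v1 ++ [a]) ⊆ endPos S (v2 ++ [a]) := by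
  intro j hj
  obtain ⟨hjl, t, ht⟩ := hj
  have hlen : (t ++ (v1 ++ [a])).length = j + 1 := by
    rw [ht]; exact List.length_take_of_le (by omega)
  have hj1 : 1 ≤ j := by
    have := List.length_pos_iff.mpr hv1
    simp only [List.length_append, List.length_cons, List.length_nil] at hlen
    omega
  have htake : S.take j = t ++ v1 := by
    have : S.take j = (S.take (j+1)).take j := by rw [List.take_take]; congr 1; omega
    rw [this, ← ht, ← List.append_assoc, List.take_left' (by
      simp only [List.length_append, List.length_cons, List.length_nil] at hlen ⊢; omega)]
  have hmem : j - 1 ∈ endPos S v1 := by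
    refine ⟨by omega, ?_⟩
    have : j - 1 + 1 = j := by omega
    rw [this, htake]
    exact ⟨t, rfl⟩
  rw [h] at hmem
  obtain ⟨-, t2, ht2⟩ := hmem
  have hj2 : j - 1 + 1 = j := by omega
  rw [hj2] at ht2
  have hS : S.take (j + 1) = S.take j ++ [a] := by
    rw [← ht, htake, List.append_assoc]
  refine ⟨hjl, t2, ?_⟩
  rw [hS, ← ht2, List.append_assoc]

/-- If the DAWG edge `([u], a, [ua])` is secondary, i.e.
`|longest([u])| + 1 < |longest([ua])|`, then there is a unique character `b` such that
`b · longest([u]) · a` is end-position equivalent to `longest([u]) · a`. -/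
theorem stmt6 {α : Type*} (S u lu lua : List α) (a : α)
    (hu : u <:+: S) (hune : u ≠ []) (hua : (u ++ [a]) <:+: S)
    (hlu1 : lu <:+: S) (hlu2 : lu ≠ []) (hlu3 : endPos S lu = endPos S u)
    (hlu4 : ∀ w, w <:+: S → w ≠ [] → endPos S w = endPos S u → w.length ≤ lu.length)
    (hlua1 : lua <:+: S) (hlua2 : lua ≠ [])
    (hlua3 : endPos S lua = endPos S (u ++ [a]))
    (hlua4 : ∀ w, w <:+: S → w ≠ [] → endPos S w = endPos S (u ++ [a]) →
      w.length ≤ lua.length)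
    (hsec : lu.length + 1 < lua.length) :
    ∃! b : α, endPos S (b :: (lu ++ [a])) = endPos S (lu ++ [a]) := by
  -- endPos (lu ++ [a]) = endPos (u ++ [a])
  have hkey : endPos S (lu ++ [a]) = endPos S (u ++ [a]) :=
    Set.Subset.antisymm (endPos_snoc_subset a hlu2 hlu3)
      (endPos_snoc_subset a hune hlu3.symm)
  obtain ⟨j0, hj0⟩ := endPos_nonempty hua (by simp)
  have hj0lua : j0 ∈ endPos S lua := by rw [hlua3]; exact hj0
  have hj0lu : j0 ∈ endPos S (lu ++ [a]) := by rw [hkey]; exact hj0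
  -- lu ++ [a] is a proper suffix of lua
  have hsuf : (lu ++ [a]) <:+ lua :=
    List.suffix_of_suffix_length_le hj0lu.2 hj0lua.2 (by simp; omega)
  obtain ⟨t, ht⟩ := hsuf
  have htne : t ≠ [] := by
    intro h; rw [h] at ht; simp at ht
    have := congrArg List.length ht; simp at this; omega
  obtain ⟨ts, b, rfl⟩ := (List.eq_nil_or_concat t).resolve_left htne
  have hbsuf : (b :: (lu ++ [a])) <:+ lua := ⟨ts, by rw [← ht]; simp⟩
  refine ⟨b, ?_, ?_⟩
  · apply Set.Subset.antisymm
    · exact endPos_mono S (List.suffix_cons b (lu ++ [a]))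
    · rw [hkey, ← hlua3]
      exact endPos_mono S hbsuf
  · intro b' hb'
    have h1 : j0 ∈ endPos S (b' :: (lu ++ [a])) := by rw [hb']; exact hj0lu
    have h2 : j0 ∈ endPos S (b :: (lu ++ [a])) := by
      exact endPos_mono S hbsuf hj0lua
    have hss : (b' :: (lu ++ [a])) <:+ (b :: (lu ++ [a])) :=
      List.suffix_of_suffix_length_le h1.2 h2.2 (by simp)
    have := hss.eq_of_length (by simp)
    exact (List.cons.injEq .. ▸ this).1
end

section
/- The number of states of the DAWG of a string S of length N is O(N): the number of equivalence classes of the end-position equivalence relation on nonempty substrings of S is at most 2N - 1 (for N ≥ 2). -/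
/-!
The end-position sets of the nonempty substrings of `S` are nonempty subsets of `{0, …, N - 1}`,
and any two of them are nested or disjoint: two words ending at the same position are suffixes of
the same prefix of `S`, so one is a suffix of the other. A laminar family of nonempty subsets of an
`n`-element set `X` has at most `2n - 1` members: if `A` is a largest member properly contained
in `X`, every other member lies in `A`, lies in `X \ A`, or equals `X`, and induction applies to
the first two parts.
-/

open Finset

def IsLaminar {α : Type*} (F : Finset (Finset α)) : Prop :=
  (F : Set (Finset α)).Pairwise fun A B => A ⊆ B ∨ B ⊆ A ∨ Disjoint A B

namespace IsLaminar

variable {α : Type*} {F G : Finset (Finset α)}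

theorem mono (hF : IsLaminar F) (hG : G ⊆ F) : IsLaminar G :=
  Set.Pairwise.mono (coe_subset.2 hG) hF

theorem subset_or_subset_sdiff_or_eq [DecidableEq α] (hF : IsLaminar F) {X A B : Finset α}
    (hA : A ∈ F) (hAX : A ⊂ X) (hAmax : ∀ B ∈ F, B ⊂ X → #B ≤ #A) (hB : B ∈ F) (hBX : B ⊆ X) :
    B ⊆ A ∨ B ⊆ X \ A ∨ B = X := by
  obtain rfl | hBA := eq_or_ne B A
  · exact Or.inl subset_rfl
  rcases hF hB hA hBA with hsub | hsup | hdisj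
  · exact Or.inl hsub
  · obtain rfl | hBX' := eq_or_ne B X
    · exact Or.inr (Or.inr rfl)
    · have := hAmax B hB (_root_.ssubset_iff_subset_ne.2 ⟨hBX, hBX'⟩)
      exact absurd (eq_of_subset_of_card_le hsup this).symm hBA
  · exact Or.inr (Or.inl (subset_sdiff.2 ⟨hBX, hdisj⟩))

theorem card_le (hF : IsLaminar F) {X : Finset α} (hsub : ∀ A ∈ F, A ⊆ X)
    (hne : ∀ A ∈ F, A.Nonempty) : #F ≤ 2 * #X - 1 := by
  classical
  induction X using Finset.strongInduction generalizing F with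
  | H X ih =>
    by_cases hstrict : ∃ A ∈ F, A ⊂ X
    swap
    · push Not at hstrict
      have hFX : F ⊆ {X} := fun B hB => mem_singleton.2 <| by_contra fun hBX =>
        hstrict B hB (_root_.ssubset_iff_subset_ne.2 ⟨hsub B hB, hBX⟩)
      obtain rfl | ⟨B, hB⟩ := F.eq_empty_or_nonempty
      · simp
      · have := card_pos.2 ((hne B hB).mono (hsub B hB))
        have := card_le_card hFX
        rw [card_singleton] at this
        omega
    obtain ⟨A₀, hA₀, hA₀X⟩ := hstrict
    obtain ⟨A, hA, hAmax⟩ :=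
      exists_max_image (F.filter (· ⊂ X)) card ⟨A₀, mem_filter.2 ⟨hA₀, hA₀X⟩⟩
    simp only [mem_filter] at hA hAmax
    have hsplit : F ⊆ F.filter (· ⊆ A) ∪ F.filter (· ⊆ X \ A) ∪ {X} := by
      intro B hB
      rcases hF.subset_or_subset_sdiff_or_eq hA.1 hA.2 (fun B hB hBX => hAmax B ⟨hB, hBX⟩) hB
        (hsub B hB) with h | h | h <;> simp [hB, h]
    have hcardA : #(F.filter (· ⊆ A)) ≤ 2 * #A - 1 :=
      ih A hA.2 (hF.mono (filter_subset _ _)) (by simp +contextual)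
        (fun B hB => hne B (mem_of_mem_filter B hB))
    have hcardXA : #(F.filter (· ⊆ X \ A)) ≤ 2 * #(X \ A) - 1 :=
      ih (X \ A) (sdiff_ssubset hA.2.subset (hne A hA.1)) (hF.mono (filter_subset _ _))
        (by simp +contextual) (fun B hB => hne B (mem_of_mem_filter B hB))
    have hApos : 0 < #A := card_pos.2 (hne A hA.1)
    have hAlt : #A < #X := card_lt_card hA.2
    have := card_le_card hsplit
    have := card_union_le (F.filter (· ⊆ A) ∪ F.filter (· ⊆ X \ A)) {X}
    have := card_union_le (F.filter (· ⊆ A)) (F.filter (· ⊆ X \ A))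
    rw [card_sdiff_of_subset hA.2.subset] at hcardXA
    simp only [card_singleton] at *
    omega

end IsLaminar

section EndPos

variable {α : Type*} (S : List α)

theorem endPos_subset_Iio (u : List α) : endPos S u ⊆ Set.Iio S.length := fun _ hj => hj.1

theorem endPos_finite (u : List α) : (endPos S u).Finite :=
  (Set.finite_Iio _).subset (endPos_subset_Iio S u)

theorem endPos_nonempty_s7 {u : List α} (hu : u <:+: S) (hne : u ≠ []) : (endPos S u).Nonempty := by
  obtain ⟨s, t, rfl⟩ := hu
  have hlen : 0 < u.length := List.length_pos_iff.2 hne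
  have hend : s.length + u.length - 1 + 1 = (s ++ u).length := by
    simp only [List.length_append]; omega
  refine ⟨s.length + u.length - 1, ?_, ?_⟩
  · simp only [List.length_append]; omega
  · rw [hend, List.take_left]
    exact List.suffix_append s u

theorem endPos_anti {u w : List α} (h : w <:+ u) : endPos S u ⊆ endPos S w :=
  fun _ ⟨hj, hu⟩ => ⟨hj, h.trans hu⟩

theorem endPos_subset_or_subset_or_disjoint (u w : List α) :
    endPos S u ⊆ endPos S w ∨ endPos S w ⊆ endPos S u ∨ Disjoint (endPos S u) (endPos S w) := by
  by_cases hd : Disjoint (endPos S u) (endPos S w)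
  · exact Or.inr (Or.inr hd)
  obtain ⟨j, ⟨-, hu⟩, ⟨-, hw⟩⟩ := Set.not_disjoint_iff.1 hd
  rcases List.suffix_or_suffix_of_suffix hu hw with h | h
  · exact Or.inr (Or.inl (endPos_anti S h))
  · exact Or.inl (endPos_anti S h)

end EndPos

theorem stmt7_general {α : Type*} (S : List α) :
    {E : Set ℕ | ∃ u, u <:+: S ∧ u ≠ [] ∧ E = endPos S u}.ncard ≤ 2 * S.length - 1 := by
  classical
  set T := (range S.length).powerset.filter
    fun A : Finset ℕ => ∃ u, u <:+: S ∧ u ≠ [] ∧ ↑A = endPos S u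
  have hT : IsLaminar T := by
    rintro A hA B hB -
    obtain ⟨u, -, -, hAu⟩ := (mem_filter.1 hA).2
    obtain ⟨w, -, -, hBw⟩ := (mem_filter.1 hB).2
    simpa only [← coe_subset, ← disjoint_coe, hAu, hBw] using
      endPos_subset_or_subset_or_disjoint S u w
  have hne : ∀ A ∈ T, A.Nonempty := by
    intro A hA
    obtain ⟨u, hu, hune, hAu⟩ := (mem_filter.1 hA).2
    exact coe_nonempty.1 (hAu ▸ endPos_nonempty_s7 S hu hune)
  have hfamily : {E : Set ℕ | ∃ u, u <:+: S ∧ u ≠ [] ∧ E = endPos S u} ⊆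
      (↑) '' (T : Set (Finset ℕ)) := by
    rintro _ ⟨u, hu, hune, rfl⟩
    have hrange : (endPos_finite S u).toFinset ⊆ range S.length := by
      simpa [Set.Finite.toFinset_subset] using endPos_subset_Iio S u
    exact ⟨_, mem_filter.2 ⟨mem_powerset.2 hrange, u, hu, hune, by simp⟩, by simp⟩
  calc _ ≤ ((↑) '' (T : Set (Finset ℕ)) : Set (Set ℕ)).ncard := Set.ncard_le_ncard hfamily
    _ ≤ #T := (Set.ncard_image_le T.finite_toSet).trans (Set.ncard_coe_finset T).le
    _ ≤ 2 * S.length - 1 := by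
      simpa using hT.card_le (fun A hA => mem_powerset.1 (mem_filter.1 hA).1) hne

/-- The number of end-position equivalence classes of nonempty substrings of a string
of length `N ≥ 2` is at most `2N - 1`. -/
theorem stmt7 {α : Type*} (S : List α) (h : 2 ≤ S.length) :
    {E : Set ℕ | ∃ u, u <:+: S ∧ u ≠ [] ∧ E = endPos S u}.ncard ≤ 2 * S.length - 1 :=
  stmt7_general S
end

section
/- In the run-length encoding a_1^{p_1}...a_m^{p_m} of a string S, if an s-factor f_i of the s-factorization of S starts within the k-th run a_k^{p_k} at the j-th character of that run with j ≥ 2, then f_i has a^{p_k - j + 1}, the remaining suffix of the run, as a prefix. -/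
/-- If an s-factor starts at the `j`-th character (1-indexed, `j ≥ 2`) of a maximal run
`a^p`, i.e. at 0-indexed position `l` with `A.length < l < A.length + p`, then the
remaining suffix `a^{A.length + p - l}` of the run is a prefix of that s-factor. -/
theorem stmt11 {α : Type*} (S : List α) (fs : List (List α)) (hfs : IsSFact S fs)
    (a : α) (p : ℕ) (A B : List α) (hp : 1 ≤ p)
    (hS : S = A ++ List.replicate p a ++ B)
    (hA : ∀ x, A.getLast? = some x → x ≠ a)
    (hB : ∀ x, B.head? = some x → x ≠ a)
    (i : ℕ) (hi : i < fs.length)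
    (hstart : A.length < ((fs.take i).flatten).length)
    (hstart2 : ((fs.take i).flatten).length < A.length + p) :
    List.replicate (A.length + p - ((fs.take i).flatten).length) a <+: fs.get ⟨i, hi⟩ := by
  obtain ⟨hflat, hne, hprop⟩ := hfs
  set l := ((fs.take i).flatten).length with hl
  have hdrop : ∀ k, A.length ≤ k → k ≤ A.length + p →
      S.drop k = List.replicate (A.length + p - k) a ++ B := by
    intro k h1 h2
    subst hS
    rw [List.drop_append, List.drop_append,
      List.drop_replicate, List.drop_eq_nil_of_le h1]
    simp only [List.length_append, List.length_replicate, List.nil_append]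
    have e1 : k - (A.length + p) = 0 := by omega
    have e2 : p - (k - A.length) = A.length + p - k := by omega
    rw [e1, e2, List.drop_zero]
  have hchar : ∀ k, A.length ≤ k → k < A.length + p → S[k]? = some a := by
    intro k h1 h2
    have h0 : S[k]? = (S.drop k)[0]? := by rw [List.getElem?_drop, Nat.add_zero]
    rw [h0, hdrop k h1 h2.le]
    have hm : 0 < A.length + p - k := by omega
    rw [List.getElem?_append_left (by simpa using hm)]
    simp [List.getElem?_replicate, hm]
  have hj : ∃ j < l, S[j]? = S[l]? :=
    ⟨l - 1, by omega, by rw [hchar (l-1) (by omega) (by omega), hchar l (by omega) hstart2]⟩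
  obtain ⟨hpref, -, hmax⟩ := (hprop i hi).2 hj
  set g := List.replicate (A.length + p - l) a with hg
  have hg1 : g <+: S.drop l := by
    rw [hdrop l hstart.le hstart2.le]
    exact List.prefix_append _ _
  have hg2 : ∃ q < l, g <+: S.drop q := by
    refine ⟨l - 1, by omega, ?_⟩
    rw [hdrop (l-1) (by omega) (by omega)]
    refine List.IsPrefix.trans ?_ (List.prefix_append _ _)
    exact ⟨[a], by rw [hg, ← List.replicate_succ']; congr 1; omega⟩
  exact List.prefix_of_prefix_length_le hg1 hpref (hmax g hg1 hg2)
end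

section
/- If every equivalence class member is a suffix of the longest member, then primary edges form a tree rooted at the source: in the DAWG of S, every state [u] with u ≠ ε has exactly one incoming primary edge, i.e., exactly one pair ([w], a) with w·a ∈ [u] and |longest([w])| + 1 = |longest([u])|. -/
/-- `w` is either the empty string (the source state) or the longest member of its
end-position equivalence class. -/
def IsLongestRep {α : Type*} (S w : List α) : Prop :=
  w = [] ∨ (w <:+: S ∧ w ≠ [] ∧
    ∀ v, v <:+: S → v ≠ [] → endPos S v = endPos S w → v.length ≤ w.length)

/-! If `wa` is the longest member of its class, then `w` is the longest member of its class:
any `v` with the end positions of `w` gives `va` with the end positions of `wa`, so `|v| ≤ |w|`.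
Hence `(w, a)` is an incoming primary edge of `[u] = [wa]`, and it is the only one, because two
words of the same length ending at a common position coincide. -/

section

variable {α : Type*} {S x y : List α}

theorem List.append_singleton_suffix_append_singleton_iff {l : List α} {a c : α} :
    x ++ [a] <:+ l ++ [c] ↔ a = c ∧ x <:+ l := by
  simp [List.suffix_concat_iff, and_comm]

theorem infix_of_mem_endPos {j : ℕ} (h : j ∈ endPos S x) : x <:+: S :=
  h.2.isInfix.trans (List.take_prefix _ _).isInfix

theorem endPos_nonempty_iff (hx : x ≠ []) : (endPos S x).Nonempty ↔ x <:+: S := by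
  refine ⟨fun ⟨_, hj⟩ => infix_of_mem_endPos hj, fun h => ?_⟩
  obtain ⟨t, hxt, htS⟩ := List.infix_iff_suffix_prefix.1 h
  have ht : 0 < t.length := List.length_pos_iff.2 fun ht => hx (List.suffix_nil.1 (ht ▸ hxt))
  refine ⟨t.length - 1, by simpa using htS.length_le.trans_lt' (by omega), ?_⟩
  rwa [Nat.sub_add_cancel ht, ← List.prefix_iff_eq_take.1 htS]

theorem zero_notMem_endPos_append_singleton (hx : x ≠ []) (a : α) :
    0 ∉ endPos S (x ++ [a]) := fun h => by
  have hlen := h.2.length_le.trans (List.length_take_le 1 S)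
  exact hx (by simpa using hlen)

theorem add_one_mem_endPos_append_singleton_iff {a : α} {i : ℕ} :
    i + 1 ∈ endPos S (x ++ [a]) ↔ S[i + 1]? = some a ∧ i ∈ endPos S x := by
  rcases lt_or_ge (i + 1) S.length with hi | hi
  · have htake : S.take (i + 1 + 1) = S.take (i + 1) ++ [S[i + 1]] := by
      rw [List.take_add_one, List.getElem?_eq_getElem hi]
      rfl
    simp only [endPos, Set.mem_ofPred_eq, htake, hi, Nat.lt_of_succ_lt hi, true_and,
      List.append_singleton_suffix_append_singleton_iff, List.getElem?_eq_getElem hi,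
      Option.some_inj, eq_comm]
  · simp [endPos, Nat.not_lt.2 hi]

theorem endPos_append_singleton_congr (hx : x ≠ []) (hy : y ≠ []) (h : endPos S x = endPos S y)
    (a : α) : endPos S (x ++ [a]) = endPos S (y ++ [a]) := by
  ext (_ | i)
  · simp [zero_notMem_endPos_append_singleton, hx, hy]
  · simp [add_one_mem_endPos_append_singleton_iff, h]

theorem IsLongestRep.of_append_singleton {a : α} (h : IsLongestRep S (x ++ [a])) :
    IsLongestRep S x := by
  obtain ⟨hxaS, -, hmax⟩ := h.resolve_left (by simp)
  by_cases hx : x = []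
  · exact Or.inl hx
  refine Or.inr ⟨(List.prefix_append x [a]).isInfix.trans hxaS, hx, fun v _ hv hvx => ?_⟩
  have hva : endPos S (v ++ [a]) = endPos S (x ++ [a]) :=
    endPos_append_singleton_congr hv hx hvx a
  have hvaS : v ++ [a] <:+: S :=
    (endPos_nonempty_iff (by simp)).1 (hva ▸ (endPos_nonempty_iff (by simp)).2 hxaS)
  simpa using hmax _ hvaS (by simp) hva

theorem eq_of_mem_endPos_of_length_eq {j : ℕ} (hx : j ∈ endPos S x) (hy : j ∈ endPos S y)
    (hlen : x.length = y.length) : x = y := by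
  rcases List.suffix_or_suffix_of_suffix hx.2 hy.2 with h | h
  · exact h.eq_of_length hlen
  · exact (h.eq_of_length hlen.symm).symm

end

theorem stmt15_general {α : Type*} (S u lu : List α)
    (hlu1 : lu <:+: S) (hlu2 : lu ≠ []) (hlu3 : endPos S lu = endPos S u)
    (hlu4 : ∀ v, v <:+: S → v ≠ [] → endPos S v = endPos S u → v.length ≤ lu.length) :
    ∃! e : List α × α, IsLongestRep S e.1 ∧ (e.1 ++ [e.2]) <:+: S ∧
      endPos S (e.1 ++ [e.2]) = endPos S u ∧ e.1.length + 1 = lu.length := by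
  obtain ⟨w, a, rfl⟩ := (List.eq_nil_or_concat' lu).resolve_left hlu2
  have hwa : IsLongestRep S (w ++ [a]) :=
    Or.inr ⟨hlu1, hlu2, fun v hv hv0 hvw => hlu4 v hv hv0 (hvw.trans hlu3)⟩
  obtain ⟨j, hj⟩ := (endPos_nonempty_iff hlu2).2 hlu1
  refine ⟨(w, a), ⟨hwa.of_append_singleton, hlu1, hlu3, by simp⟩, ?_⟩
  rintro ⟨w', a'⟩ ⟨-, -, hw'a', hlen⟩
  have hj' : j ∈ endPos S (w' ++ [a']) := hw'a' ▸ hlu3 ▸ hj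
  obtain ⟨rfl, rfl⟩ :=
    List.append_singleton_inj.1 (eq_of_mem_endPos_of_length_eq hj' hj (by simpa using hlen))
  rfl

/-- Every DAWG state `[u]` with `u ≠ ε` has exactly one incoming primary edge:
exactly one pair `([w], a)` (with the state `[w]` represented by its longest member)
such that `w · a ∈ [u]` and `|longest([w])| + 1 = |longest([u])|`. -/
theorem stmt15 {α : Type*} (S u lu : List α)
    (hu : u <:+: S) (hune : u ≠ [])
    (hlu1 : lu <:+: S) (hlu2 : lu ≠ []) (hlu3 : endPos S lu = endPos S u)
    (hlu4 : ∀ v, v <:+: S → v ≠ [] → endPos S v = endPos S u → v.length ≤ lu.length) :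
    ∃! e : List α × α, IsLongestRep S e.1 ∧ (e.1 ++ [e.2]) <:+: S ∧
      endPos S (e.1 ++ [e.2]) = endPos S u ∧ e.1.length + 1 = lu.length :=
  stmt15_general S u lu hlu1 hlu2 hlu3 hlu4
end
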